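/- Let S be an infinite set regarded as a structure in the empty signature (pure equality), and let I be the directed set of finite subsets of S ordered by inclusion. Then lim_I Th(S_i^*) = Th(S^*): for every sentence φ with parameters a_1,…,a_m ∈ S, φ holds in S if and only if φ holds in S_i for all sufficiently large finite subsets S_i containing a_1,…,a_m. In particular, the first-order theory of the infinite set S is the limit of the first-order theories of its finite subsets. -/

import Mathlib

open FirstOrder Language

/-- A theory: a set of sentences closed under (semantic) logical consequence. -/
def IsClosedTheory {L : FirstOrder.Language} (Δ : L.Theory) : Prop :=
  ∀ θ : L.Sentence, Δ ⊨ᵇ θ → θ ∈ Δ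

/-- `limsup` of a family of theories: frequent membership. -/
def limsupTheory {L : FirstOrder.Language} {ι : Type*} [Preorder ι]
    (Δ : ι → L.Theory) : L.Theory :=
  { θ | ∀ i, ∃ j, i ≤ j ∧ θ ∈ Δ j }

/-- `liminf` of a family of theories: eventual membership. -/
def liminfTheory {L : FirstOrder.Language} {ι : Type*} [Preorder ι]
    (Δ : ι → L.Theory) : L.Theory :=
  { θ | ∃ i, ∀ j, i ≤ j → θ ∈ Δ j }

/-- A theory is consistent when it is not the set of all sentences. -/
def ConsistentTheory {L : FirstOrder.Language} (Δ : L.Theory) : Prop :=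
  Δ ≠ Set.univ

/-- A theory is complete when it contains each sentence or its negation. -/
def CompleteTheory' {L : FirstOrder.Language} (Δ : L.Theory) : Prop :=
  ∀ θ : L.Sentence, θ ∈ Δ ∨ θ.not ∈ Δ

instance (M : Type*) : Language.empty.Structure M := Language.emptyStructure

/-- The augmented theory of a subset `A` of `M` (in the empty signature), viewed
inside the sentences of `Language.empty[[M]]`: sentences whose parameters all come
from `A` and which are true in `A`. -/
def augTheoryE {M : Type*} (A : Set M) : (Language.empty[[M]]).Theory :=
  { φ | ∃ ψ : (Language.empty[[↥A]]).Sentence,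
      (Language.empty.lhomWithConstantsMap (Subtype.val : ↥A → M)).onSentence ψ = φ ∧
      ↥A ⊨ ψ }

/-!
In the empty signature a formula can only compare its parameters and bound variables for
equality. Hence, if `X` has at least `|α| + n + d` elements, where `α` indexes the free variables,
`n` is the number of bound variables in scope and `d` the quantifier depth, every injection
`X → Y` preserves and reflects truth: a witness `y ∈ Y` outside the image is moved, by a
transposition of `Y` fixing the finitely many values in use, onto the image of an element of `X`
that is not in use.

A sentence of `L[[M]]` mentions only finitely many parameters, so it holds in `M` iff it belongs
to the augmented theory of every sufficiently large finite `B ⊆ M`. Conversely, if `φ` belonged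
to it frequently while `¬φ` holds in `M`, some `B` would contain both `φ` and `¬φ`;
interpreting the parameters in `B` through a retraction `M → B` makes `B` satisfy both.
-/

theorem exists_notMem_range_of_enatCard_lt {α β : Type*} {g : α → β}
    (h : ENat.card α < ENat.card β) : ∃ b, b ∉ Set.range g := by
  by_contra! hg
  exact (ENat.card_le_card_of_injective (Function.injective_surjInv hg)).not_gt h

namespace FirstOrder.Language

variable {L : Language} {α β γ : Type*}

theorem lhomWithConstantsMap_comp (f : α → β) (g : β → γ) :
    (L.lhomWithConstantsMap g).comp (L.lhomWithConstantsMap f) =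
      L.lhomWithConstantsMap (g ∘ f) := by
  ext n F <;> rcases F with F | F
  · rfl
  · cases n
    · rfl
    · exact isEmptyElim F
  · rfl
  · exact isEmptyElim F

theorem Formula.realize_equivSentence_symm_onSentence {M : Type*} [L.Structure M] (f : α → β)
    (ψ : L[[α]].Sentence) (v : β → M) :
    (Formula.equivSentence.symm ((L.lhomWithConstantsMap f).onSentence ψ)).Realize v ↔
      (Formula.equivSentence.symm ψ).Realize (v ∘ f) := by
  rw [Formula.realize_equivSentence_symm, Formula.realize_equivSentence_symm]
  let _ := constantsOn.structure v
  let _ := constantsOn.structure (v ∘ f)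
  have := constantsOnMap_isExpansionOn (f := f) (fα := v ∘ f) (fβ := v) rfl
  exact @LHom.realize_onSentence _ _ _ _ _ _ (LHom.sumMap_isExpansionOn _ _ M) ψ

theorem LHom.onTerm_lhomWithConstantsMap_onTerm (f : α → β) (g : β → γ) {δ : Type*}
    (u : L[[α]].Term δ) :
    (L.lhomWithConstantsMap g).onTerm ((L.lhomWithConstantsMap f).onTerm u) =
      (L.lhomWithConstantsMap (g ∘ f)).onTerm u := by
  rw [← lhomWithConstantsMap_comp, LHom.comp_onTerm]
  rfl

theorem LHom.onBoundedFormula_lhomWithConstantsMap_onBoundedFormula (f : α → β) (g : β → γ)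
    {δ : Type*} {n : ℕ} (φ : L[[α]].BoundedFormula δ n) :
    (L.lhomWithConstantsMap g).onBoundedFormula ((L.lhomWithConstantsMap f).onBoundedFormula φ) =
      (L.lhomWithConstantsMap (g ∘ f)).onBoundedFormula φ := by
  rw [← lhomWithConstantsMap_comp, LHom.comp_onBoundedFormula]
  rfl

theorem Term.mem_range_onTerm_of_subset {s t : Set α} (hst : s ⊆ t) {u : L[[α]].Term β}
    (hu : u ∈ Set.range (L.lhomWithConstantsMap ((↑) : s → α)).onTerm) :
    u ∈ Set.range (L.lhomWithConstantsMap ((↑) : t → α)).onTerm := by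
  obtain ⟨u', rfl⟩ := hu
  exact ⟨_, LHom.onTerm_lhomWithConstantsMap_onTerm (Set.inclusion hst) _ u'⟩

theorem BoundedFormula.mem_range_onBoundedFormula_of_subset {s t : Set α} (hst : s ⊆ t) {n : ℕ}
    {φ : L[[α]].BoundedFormula β n}
    (hφ : φ ∈ Set.range (L.lhomWithConstantsMap ((↑) : s → α)).onBoundedFormula) :
    φ ∈ Set.range (L.lhomWithConstantsMap ((↑) : t → α)).onBoundedFormula := by
  obtain ⟨φ', rfl⟩ := hφ
  exact ⟨_, LHom.onBoundedFormula_lhomWithConstantsMap_onBoundedFormula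
    (Set.inclusion hst) _ φ'⟩

theorem Term.exists_finite_mem_range_onTerm (u : L[[α]].Term β) :
    ∃ s : Set α, s.Finite ∧
      u ∈ Set.range (L.lhomWithConstantsMap ((↑) : s → α)).onTerm := by
  induction u with
  | var b => exact ⟨∅, Set.finite_empty, var b, rfl⟩
  | @func l F us ih =>
    choose s hs hus using ih
    rcases F with F | c
    · refine ⟨⋃ i, s i, Set.finite_iUnion hs, ?_⟩
      choose us' hus' using fun i => mem_range_onTerm_of_subset (Set.subset_iUnion s i) (hus i)
      exact ⟨func (Sum.inl F) us', by simp only [LHom.onTerm, hus']; rfl⟩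
    · cases l with
      | succ => exact isEmptyElim c
      | zero =>
        refine ⟨{c}, Set.finite_singleton c, func (L.con ⟨c, rfl⟩) finZeroElim, ?_⟩
        simp only [LHom.onTerm]
        congr 1
        exact funext finZeroElim

theorem BoundedFormula.exists_finite_mem_range_onBoundedFormula {n : ℕ}
    (φ : L[[α]].BoundedFormula β n) :
    ∃ s : Set α, s.Finite ∧
      φ ∈ Set.range (L.lhomWithConstantsMap ((↑) : s → α)).onBoundedFormula := by
  induction φ with
  | falsum => exact ⟨∅, Set.finite_empty, falsum, rfl⟩
  | equal u₁ u₂ =>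
    obtain ⟨s₁, hs₁, hu₁⟩ := u₁.exists_finite_mem_range_onTerm
    obtain ⟨s₂, hs₂, hu₂⟩ := u₂.exists_finite_mem_range_onTerm
    refine ⟨s₁ ∪ s₂, hs₁.union hs₂, ?_⟩
    obtain ⟨u₁', rfl⟩ :=
      Term.mem_range_onTerm_of_subset (Set.subset_union_left (t := s₂)) hu₁
    obtain ⟨u₂', rfl⟩ :=
      Term.mem_range_onTerm_of_subset (Set.subset_union_right (s := s₁)) hu₂
    exact ⟨equal u₁' u₂', rfl⟩
  | rel R us =>
    rcases R with R | R
    · choose s hs hus using fun i => (us i).exists_finite_mem_range_onTerm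
      choose us' hus' using fun i =>
        Term.mem_range_onTerm_of_subset (Set.subset_iUnion s i) (hus i)
      refine ⟨⋃ i, s i, Set.finite_iUnion hs, rel (Sum.inl R) us', ?_⟩
      simp only [LHom.onBoundedFormula, Function.comp_def, hus']
      rfl
    · exact isEmptyElim R
  | imp φ₁ φ₂ ih₁ ih₂ =>
    obtain ⟨s₁, hs₁, hφ₁⟩ := ih₁
    obtain ⟨s₂, hs₂, hφ₂⟩ := ih₂
    refine ⟨s₁ ∪ s₂, hs₁.union hs₂, ?_⟩
    obtain ⟨φ₁', rfl⟩ :=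
      mem_range_onBoundedFormula_of_subset (Set.subset_union_left (t := s₂)) hφ₁
    obtain ⟨φ₂', rfl⟩ :=
      mem_range_onBoundedFormula_of_subset (Set.subset_union_right (s := s₁)) hφ₂
    exact ⟨imp φ₁' φ₂', rfl⟩
  | all φ ih =>
    obtain ⟨s, hs, φ', rfl⟩ := ih
    exact ⟨s, hs, all φ', rfl⟩

def BoundedFormula.quantifierDepth : ∀ {n}, L.BoundedFormula α n → ℕ
  | _, .falsum => 0
  | _, .equal _ _ => 0
  | _, .rel _ _ => 0
  | _, .imp φ₁ φ₂ => max φ₁.quantifierDepth φ₂.quantifierDepth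
  | _, .all φ => φ.quantifierDepth + 1

theorem BoundedFormula.realize_comp_of_injective {X Y : Type*} [Finite α] {f : X → Y}
    (hf : f.Injective) {n : ℕ} (φ : Language.empty.BoundedFormula α n) (v : α → X)
    (xs : Fin n → X) (hX : ENat.card α + n + φ.quantifierDepth ≤ ENat.card X) :
    φ.Realize (f ∘ v) (f ∘ xs) ↔ φ.Realize v xs := by
  classical
  induction φ with
  | falsum => rfl
  | equal u₁ u₂ =>
    simp only [Realize, ← Sum.comp_elim, ← hf.eq_iff]
    exact Eq.congr (HomClass.realize_term (Function.emptyHom f))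
      (HomClass.realize_term (Function.emptyHom f))
  | rel R => exact isEmptyElim R
  | imp φ₁ φ₂ ih₁ ih₂ =>
    simp only [quantifierDepth] at hX
    exact imp_congr (ih₁ xs (hX.trans' (by gcongr; exact le_max_left _ _)))
      (ih₂ xs (hX.trans' (by gcongr; exact le_max_right _ _)))
  | @all n φ ih =>
    have hX' : ENat.card α + ↑(n + 1) + φ.quantifierDepth ≤ ENat.card X := by
      convert hX using 1
      simp only [quantifierDepth]
      push_cast
      ring
    have ih' (x : X) :
        φ.Realize (f ∘ v) (Fin.snoc (f ∘ xs) (f x)) ↔ φ.Realize v (Fin.snoc xs x) := by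
      rw [← Fin.comp_snoc]
      exact ih _ hX'
    refine ⟨fun h x => (ih' x).1 (h (f x)), fun h y => ?_⟩
    by_cases hy : y ∈ Set.range f
    · obtain ⟨x, rfl⟩ := hy
      exact (ih' x).2 (h x)
    obtain ⟨x, hx⟩ : ∃ x, x ∉ Set.range (Sum.elim v xs) := by
      refine exists_notMem_range_of_enatCard_lt (hX.trans_lt' ?_)
      have hfin : ENat.card α + n ≠ ⊤ :=
        (ENat.add_lt_top.2 ⟨ENat.card_lt_top_of_finite, ENat.natCast_lt_top n⟩).ne
      rw [ENat.card_sum, ENat.card_eq_coe_fintype_card (α := Fin n), Fintype.card_fin,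
        quantifierDepth]
      exact (add_zero _).symm.trans_lt ((ENat.add_lt_add_iff_left hfin).2 (by simp))
    have hv : ∀ a, f (v a) ≠ f x := fun a h => hx ⟨.inl a, hf h⟩
    have hxs : ∀ i, f (xs i) ≠ f x := fun i h => hx ⟨.inr i, hf h⟩
    have hfy : ∀ z, f z ≠ y := fun z h => hy ⟨z, h⟩
    have hgv : Equiv.swap (f x) y ∘ f ∘ v = f ∘ v :=
      funext fun a => Equiv.swap_apply_of_ne_of_ne (hv a) (hfy _)
    have hgxs : Equiv.swap (f x) y ∘ Fin.snoc (f ∘ xs) (f x) = Fin.snoc (f ∘ xs) y := by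
      rw [Fin.comp_snoc, Equiv.swap_apply_left]
      congr 1
      exact funext fun i => Equiv.swap_apply_of_ne_of_ne (hxs i) (hfy _)
    rw [← hgv, ← hgxs, StrongHomClass.realize_boundedFormula]
    exact (ih' x).2 (h x)

theorem Formula.realize_comp_of_injective {X Y : Type*} [Finite α] {f : X → Y}
    (hf : f.Injective) (φ : Language.empty.Formula α) (v : α → X)
    (hX : ENat.card α + φ.quantifierDepth ≤ ENat.card X) :
    φ.Realize (f ∘ v) ↔ φ.Realize v := by
  rw [Formula.Realize, ← Unique.eq_default (f ∘ default)]
  exact BoundedFormula.realize_comp_of_injective hf φ v default (by simpa using hX)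

end FirstOrder.Language

section AugTheory

open Filter

variable {M : Type*}

theorem realize_equivSentence_symm_of_mem_augTheoryE {B : Set M}
    {φ : Language.empty[[M]].Sentence} (h : φ ∈ augTheoryE B) {r : M → B}
    (hr : ∀ b : B, r b = b) : (Formula.equivSentence.symm φ).Realize r := by
  obtain ⟨ψ, rfl, hψ⟩ := h
  rw [Formula.realize_equivSentence_symm_onSentence, show r ∘ Subtype.val = id from funext hr]
  exact (Formula.realize_equivSentence_symm_con _ ψ).2 hψ

theorem eventually_mem_augTheoryE [Infinite M] {φ : Language.empty[[M]].Sentence} (h : M ⊨ φ) :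
    ∀ᶠ B : Finset M in atTop, φ ∈ augTheoryE (B : Set M) := by
  obtain ⟨s, hs, ψ, rfl⟩ := BoundedFormula.exists_finite_mem_range_onBoundedFormula φ
  have : Finite s := hs.to_subtype
  set χ := Formula.equivSentence.symm ψ
  have hχ : χ.Realize ((↑) : s → M) := by
    rw [← Function.id_comp ((↑) : s → M), ← Formula.realize_equivSentence_symm_onSentence]
    exact (Formula.realize_equivSentence_symm_con M _).2 h
  obtain ⟨A, hsA, hA⟩ := Infinite.exists_superset_card_eq hs.toFinset
    (hs.toFinset.card + χ.quantifierDepth) le_self_add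
  filter_upwards [eventually_ge_atTop A] with B hB
  have hsB : s ⊆ B := by simpa using hsA.trans hB
  refine ⟨(Language.empty.lhomWithConstantsMap (Set.inclusion hsB)).onSentence ψ, ?_, ?_⟩
  · exact LHom.onBoundedFormula_lhomWithConstantsMap_onBoundedFormula _ _ ψ
  · have hcard : ENat.card s + χ.quantifierDepth ≤ ENat.card (B : Set M) := by
      rw [ENat.card_coe_set_eq, ENat.card_coe_set_eq, hs.encard_eq_coe_toFinset_card,
        Set.encard_coe_eq_coe_finsetCard]
      exact_mod_cast hA ▸ Finset.card_le_card hB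
    rw [← Formula.realize_equivSentence_symm_con, Formula.realize_equivSentence_symm_onSentence,
      ← Formula.realize_comp_of_injective Subtype.val_injective _ _ hcard]
    exact hχ

theorem realize_of_frequently_mem_augTheoryE [Infinite M] {φ : Language.empty[[M]].Sentence}
    (h : ∃ᶠ B : Finset M in atTop, φ ∈ augTheoryE (B : Set M)) : M ⊨ φ := by
  by_contra hφ
  obtain ⟨m⟩ := (inferInstance : Nonempty M)
  have hnot := eventually_mem_augTheoryE (φ := φ.not) ((Sentence.realize_not M).2 hφ)
  obtain ⟨B, hφB, hnotB, hmB⟩ := (h.and_eventually (hnot.and (eventually_ge_atTop {m}))).exists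
  have : Nonempty (B : Set M) := ⟨⟨m, hmB (Finset.mem_singleton_self m)⟩⟩
  have hr := Function.leftInverse_invFun (Subtype.val_injective (p := (· ∈ (B : Set M))))
  have h₁ := realize_equivSentence_symm_of_mem_augTheoryE hφB hr
  have h₂ := realize_equivSentence_symm_of_mem_augTheoryE hnotB hr
  rw [Formula.realize_equivSentence_symm] at h₁ h₂
  exact h₂ h₁

end AugTheory

theorem limit_augTheory_finite_subsets_of_infinite (M : Type*) [Infinite M] :
    limsupTheory (fun A : Finset M => augTheoryE (↑A : Set M)) =
        (Language.empty[[M]]).completeTheory M ∧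
    liminfTheory (fun A : Finset M => augTheoryE (↑A : Set M)) =
        (Language.empty[[M]]).completeTheory M ∧
    ∀ φ : (Language.empty[[M]]).Sentence,
      M ⊨ φ ↔ ∃ A : Finset M, ∀ B : Finset M, A ≤ B → φ ∈ augTheoryE (↑B : Set M) := by
  have hfreq (φ : Language.empty[[M]].Sentence) :
      (∃ᶠ B : Finset M in Filter.atTop, φ ∈ augTheoryE (B : Set M)) ↔ M ⊨ φ :=
    ⟨realize_of_frequently_mem_augTheoryE, fun h => (eventually_mem_augTheoryE h).frequently⟩
  have hev (φ : Language.empty[[M]].Sentence) :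
      (∀ᶠ B : Finset M in Filter.atTop, φ ∈ augTheoryE (B : Set M)) ↔ M ⊨ φ :=
    ⟨fun h => realize_of_frequently_mem_augTheoryE h.frequently, eventually_mem_augTheoryE⟩
  refine ⟨Set.ext fun φ => ?_, Set.ext fun φ => ?_, fun φ => ?_⟩
  · simpa [limsupTheory, Filter.frequently_atTop] using hfreq φ
  · simpa [liminfTheory, Filter.eventually_atTop] using hev φ
  · simpa [Filter.eventually_atTop] using (hev φ).symm
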